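/- For the Huber contamination model with Dirac contaminations: if D(Q,P)² = E_{X,X'∼Q}[u(X,X')], E_{X∼P}[u(X,·)] = 0, and τ := sup_x u(x,x) < ∞, then sup over ε ∈ [0,ε₀] and z ∈ ℝ^d of D((1−ε)P + ε δ_z, P) equals ε₀ · τ^{1/2} (provided the supremum sup_z u(z,z) = τ is attained in the limit), and in particular D((1−ε)P + εR, P) ≤ ε₀ τ^{1/2} for every probability measure R and ε ≤ ε₀. -/

import Mathlib

/-!
Write `K(μ, ν) = ∫∫ u dμ dν`. For a bounded measurable kernel `K` is bilinear on finite
measures, and `E_P[u(X, ·)] = 0` together with symmetry makes `P` annihilate it from both sides.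
Hence `K(Q, Q) = ε² K(R, R)` for `Q = (1 - ε) P + ε R`, while `K(R, R) ≤ τ`. For `R = δ_z` this
gives `D(Q) = ε √(u(z, z))`, whose supremum over `ε ≤ ε₀` and `z` is `ε₀ √τ`.
-/

open MeasureTheory Function Set

open scoped ENNReal

section KernelForm

variable {X : Type*} [MeasurableSpace X] {u : X → X → ℝ} {C : ℝ}

noncomputable def kernelForm (u : X → X → ℝ) (μ ν : Measure X) : ℝ :=
  ∫ z : X × X, u z.1 z.2 ∂(μ.prod ν)

theorem integrable_kernel (hu : Measurable (uncurry u)) (hC : ∀ x y, |u x y| ≤ C)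
    (μ ν : Measure X) [IsFiniteMeasure μ] [IsFiniteMeasure ν] :
    Integrable (fun z : X × X => u z.1 z.2) (μ.prod ν) :=
  (integrable_const C).mono' hu.aestronglyMeasurable (.of_forall fun z => hC z.1 z.2)

theorem kernelForm_add_left (hu : Measurable (uncurry u)) (hC : ∀ x y, |u x y| ≤ C)
    (μ₁ μ₂ ν : Measure X) [IsFiniteMeasure μ₁] [IsFiniteMeasure μ₂] [IsFiniteMeasure ν] :
    kernelForm u (μ₁ + μ₂) ν = kernelForm u μ₁ ν + kernelForm u μ₂ ν := by
  rw [kernelForm, Measure.add_prod,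
    integral_add_measure (integrable_kernel hu hC μ₁ ν) (integrable_kernel hu hC μ₂ ν)]
  rfl

theorem kernelForm_add_right (hu : Measurable (uncurry u)) (hC : ∀ x y, |u x y| ≤ C)
    (μ ν₁ ν₂ : Measure X) [IsFiniteMeasure μ] [IsFiniteMeasure ν₁] [IsFiniteMeasure ν₂] :
    kernelForm u μ (ν₁ + ν₂) = kernelForm u μ ν₁ + kernelForm u μ ν₂ := by
  rw [kernelForm, Measure.prod_add,
    integral_add_measure (integrable_kernel hu hC μ ν₁) (integrable_kernel hu hC μ ν₂)]
  rfl

theorem kernelForm_smul_left (c : ℝ≥0∞) (μ ν : Measure X) [SFinite ν] :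
    kernelForm u (c • μ) ν = c.toReal * kernelForm u μ ν := by
  rw [kernelForm, Measure.prod_smul_left, integral_smul_measure, smul_eq_mul, kernelForm]

theorem kernelForm_smul_right (c : ℝ≥0∞) (μ ν : Measure X) [SFinite ν] :
    kernelForm u μ (c • ν) = c.toReal * kernelForm u μ ν := by
  rw [kernelForm, Measure.prod_smul_right, integral_smul_measure, smul_eq_mul, kernelForm]

theorem kernelForm_eq_zero_left (hu : Measurable (uncurry u)) (hC : ∀ x y, |u x y| ≤ C)
    {P : Measure X} [IsFiniteMeasure P] (hP : ∀ y, ∫ x, u x y ∂P = 0)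
    (ν : Measure X) [IsFiniteMeasure ν] : kernelForm u P ν = 0 := by
  rw [kernelForm, integral_prod_symm _ (integrable_kernel hu hC P ν)]
  simp [hP]

theorem kernelForm_eq_zero_right (hu : Measurable (uncurry u)) (hC : ∀ x y, |u x y| ≤ C)
    (hsymm : ∀ x y, u x y = u y x) {P : Measure X} [IsFiniteMeasure P]
    (hP : ∀ y, ∫ x, u x y ∂P = 0) (μ : Measure X) [IsFiniteMeasure μ] :
    kernelForm u μ P = 0 := by
  have hP' : ∀ x, ∫ y, u x y ∂P = 0 := fun x => by simp only [hsymm x]; exact hP x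
  rw [kernelForm, integral_prod _ (integrable_kernel hu hC μ P)]
  simp [hP']

theorem kernelForm_smul_add_smul (hu : Measurable (uncurry u)) (hC : ∀ x y, |u x y| ≤ C)
    (hsymm : ∀ x y, u x y = u y x) {P : Measure X} [IsFiniteMeasure P]
    (hP : ∀ y, ∫ x, u x y ∂P = 0) (R : Measure X) [IsFiniteMeasure R]
    {a b : ℝ≥0∞} (ha : a ≠ ∞) (hb : b ≠ ∞) :
    kernelForm u (a • P + b • R) (a • P + b • R) = b.toReal ^ 2 * kernelForm u R R := by
  have := P.smul_finite ha
  have := R.smul_finite hb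
  simp only [kernelForm_add_left hu hC, kernelForm_add_right hu hC, kernelForm_smul_left,
    kernelForm_smul_right, kernelForm_eq_zero_left hu hC hP,
    kernelForm_eq_zero_right hu hC hsymm hP]
  ring

theorem sqrt_kernelForm_ofReal_smul_add (hu : Measurable (uncurry u))
    (hC : ∀ x y, |u x y| ≤ C) (hsymm : ∀ x y, u x y = u y x) {P : Measure X} [IsFiniteMeasure P]
    (hP : ∀ y, ∫ x, u x y ∂P = 0) (R : Measure X) [IsFiniteMeasure R] {ε : ℝ} (hε : 0 ≤ ε) :
    √(kernelForm u (ENNReal.ofReal (1 - ε) • P + ENNReal.ofReal ε • R)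
        (ENNReal.ofReal (1 - ε) • P + ENNReal.ofReal ε • R)) = ε * √(kernelForm u R R) := by
  rw [kernelForm_smul_add_smul hu hC hsymm hP R ENNReal.ofReal_ne_top ENNReal.ofReal_ne_top,
    ENNReal.toReal_ofReal hε, Real.sqrt_mul (sq_nonneg ε), Real.sqrt_sq hε]

theorem kernelForm_le (hu : Measurable (uncurry u)) (hC : ∀ x y, |u x y| ≤ C)
    (R : Measure X) [IsProbabilityMeasure R] : kernelForm u R R ≤ C :=
  (integral_mono (integrable_kernel hu hC R R) (integrable_const C)
    fun z => (abs_le.1 (hC z.1 z.2)).2).trans_eq (by simp)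

theorem kernelForm_dirac (hu : Measurable (uncurry u)) (z : X) :
    kernelForm u (Measure.dirac z) (Measure.dirac z) = u z z := by
  rw [kernelForm, Measure.dirac_prod_dirac]
  exact integral_dirac' _ _ hu.stronglyMeasurable

end KernelForm

theorem isProbabilityMeasure_ofReal_smul_add {X : Type*} [MeasurableSpace X]
    (P R : Measure X) [IsProbabilityMeasure P] [IsProbabilityMeasure R] {ε : ℝ}
    (h₀ : 0 ≤ ε) (h₁ : ε ≤ 1) :
    IsProbabilityMeasure (ENNReal.ofReal (1 - ε) • P + ENNReal.ofReal ε • R) := by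
  constructor
  simp [← ENNReal.ofReal_add (sub_nonneg.2 h₁) h₀]

theorem Real.sqrt_ciSup {ι : Sort*} [Nonempty ι] {f : ι → ℝ} (hf : BddAbove (range f)) :
    √(⨆ i, f i) = ⨆ i, √(f i) :=
  Monotone.map_ciSup_of_continuousAt Real.continuous_sqrt.continuousAt
    (fun _ _ => Real.sqrt_le_sqrt) hf

/-- Tightness of the KSD bound for Huber's contamination model: with a bounded
positive-definite Stein kernel `u` satisfying `E_P[u(X,·)] = 0` and
`⨆ z, u(z,z) = τ`, the supremum of `D((1−ε)P + εδ_z, P)` over `ε ∈ [0,ε₀]` and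
`z` equals `ε₀ √τ`, and `D((1−ε)P + εR, P) ≤ ε₀ √τ` for every probability
measure `R` and `ε ∈ [0, ε₀]`. -/
theorem stmt5 {X : Type*} [MeasurableSpace X] [Nonempty X]
    (u : X → X → ℝ) (τ : ℝ)
    (hmeas : Measurable (Function.uncurry u))
    (hsymm : ∀ x y, u x y = u y x)
    (hdiag : ∀ x, 0 ≤ u x x)
    (hbound : ∀ x y, |u x y| ≤ Real.sqrt (u x x) * Real.sqrt (u y y))
    (hble : ∀ x, u x x ≤ τ) (hτ : (⨆ z, u z z) = τ)
    (P : Measure X) [IsProbabilityMeasure P]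
    (hzero : ∀ y, ∫ x, u x y ∂P = 0)
    (ε₀ : ℝ) (hε₀ : ε₀ ∈ Set.Icc (0:ℝ) 1)
    (D : Measure X → ℝ)
    (hD : ∀ Q : Measure X, IsProbabilityMeasure Q →
      D Q = Real.sqrt (∫ z : X × X, u z.1 z.2 ∂(Q.prod Q))) :
    (⨆ ε : Set.Icc (0:ℝ) ε₀, ⨆ z : X,
        D (ENNReal.ofReal (1 - (ε : ℝ)) • P + ENNReal.ofReal (ε : ℝ) • Measure.dirac z))
      = ε₀ * Real.sqrt τ ∧
    ∀ (R : Measure X), IsProbabilityMeasure R → ∀ ε ∈ Set.Icc (0:ℝ) ε₀,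
      D (ENNReal.ofReal (1 - ε) • P + ENNReal.ofReal ε • R) ≤ ε₀ * Real.sqrt τ := by
  obtain ⟨x₀⟩ := ‹Nonempty X›
  have hτ₀ : 0 ≤ τ := (hdiag x₀).trans (hble x₀)
  have hC : ∀ x y, |u x y| ≤ τ := fun x y =>
    calc |u x y| ≤ √(u x x) * √(u y y) := hbound x y
      _ ≤ √τ * √τ := by gcongr <;> apply hble
      _ = τ := Real.mul_self_sqrt hτ₀
  have hD_mix (R : Measure X) [IsProbabilityMeasure R] (ε : ℝ) (hε : ε ∈ Icc (0 : ℝ) ε₀) :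
      D (ENNReal.ofReal (1 - ε) • P + ENNReal.ofReal ε • R) = ε * √(kernelForm u R R) := by
    rw [hD _ (isProbabilityMeasure_ofReal_smul_add P R hε.1 (hε.2.trans hε₀.2))]
    exact sqrt_kernelForm_ofReal_smul_add hmeas hC hsymm hzero R hε.1
  refine ⟨?_, fun R _ ε hε => ?_⟩
  · calc ⨆ ε : Icc (0 : ℝ) ε₀, ⨆ z : X,
          D (ENNReal.ofReal (1 - (ε : ℝ)) • P + ENNReal.ofReal (ε : ℝ) • Measure.dirac z)
        = ⨆ ε : Icc (0 : ℝ) ε₀, (ε : ℝ) * √τ := by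
          refine iSup_congr fun ε => ?_
          simp only [hD_mix _ ε ε.2, kernelForm_dirac hmeas]
          rw [← Real.mul_iSup_of_nonneg ε.2.1, ← Real.sqrt_ciSup ⟨τ, forall_mem_range.2 hble⟩, hτ]
      _ = ε₀ * √τ := by
          rw [← Real.iSup_mul_of_nonneg (Real.sqrt_nonneg τ), ← sSup_eq_iSup', csSup_Icc hε₀.1]
  · rw [hD_mix R ε hε]
    exact mul_le_mul hε.2 (Real.sqrt_le_sqrt (kernelForm_le hmeas hC R)) (Real.sqrt_nonneg _)
      hε₀.1
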